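/- arXiv:1912.12805 — 4 statements merged into one kernel-verified Lean document; each statement's English description precedes it below -/
import Mathlib

section
/- In the abstract setting of Lie-derivative operators L : V → End_R(M) with L([u,v]) = [L(u), L(v)] on an R-module M (R ⊇ ℚ), suppose: h_Y − h_X = L(ξ₁) g, l_Y − l_X = 2 L(ξ₁) h_X + (L(ξ₂) + L(ξ₁)²) g, and X_Y − X_X = ξ₁ (where X_X, X_Y ∈ V and g, h_X, h_Y, l_X, l_Y ∈ M). Define L̂_X := l_X − 2 L(X_X) h_X + L(X_X)² g and similarly L̂_Y. Then L̂_Y − L̂_X = L(σ) g, where σ := ξ₂ + [ξ₁, X_X]. -/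
/-- The variable `L̂ := l − 2 L(X) h + L(X)² g` built from a second-order perturbation `l`,
a first-order perturbation `h`, and the gauge-variant part `X` of `h` transforms under a
second-order gauge transformation like a first-order perturbation with generator
`σ = ξ₂ + [ξ₁, X]`:  `L̂_Y − L̂_X = L(σ) g`. -/
theorem hatL_gauge_transformation
    (R M V : Type*) [CommRing R] [Algebra ℚ R]
    [AddCommGroup M] [Module R M]
    [LieRing V] [LieAlgebra R V]
    (L : V →ₗ[R] Module.End R M)
    (hL : ∀ u v : V, L ⁅u, v⁆ = L u * L v - L v * L u)
    (g hX hY lX lY : M) (ξ₁ ξ₂ XX XY : V)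
    (hh : hY - hX = (L ξ₁) g)
    (hl : lY - lX = 2 • (L ξ₁) hX + (L ξ₂ + (L ξ₁) ^ 2) g)
    (hXtrans : XY - XX = ξ₁) :
    (lY - 2 • (L XY) hY + ((L XY) ^ 2) g)
      - (lX - 2 • (L XX) hX + ((L XX) ^ 2) g)
      = (L (ξ₂ + ⁅ξ₁, XX⁆)) g := by
  have hXY : XY = ξ₁ + XX := by rw [← hXtrans]; abel
  have hhY : hY = (L ξ₁) g + hX := by rw [← hh]; abel
  have hlY : lY = 2 • (L ξ₁) hX + (L ξ₂ + (L ξ₁) ^ 2) g + lX := by rw [← hl]; abel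
  subst hXY hhY hlY
  simp only [hL, map_add, sq, add_mul, mul_add, Module.End.mul_apply, LinearMap.add_apply,
    LinearMap.sub_apply, map_smul, smul_add]
  abel
end

section
/- In the abstract Lie-derivative setting L : V → End_R(M) with L([u,v]) = [L(u), L(v)], suppose Q₀ ∈ M is fixed, and for two gauges X, Y one has first- and second-order perturbations satisfying Q₁ʸ − Q₁ˣ = L(ξ₁) Q₀ and Q₂ʸ − Q₂ˣ = 2 L(ξ₁) Q₁ˣ + (L(ξ₂) + L(ξ₁)²) Q₀, together with gauge-variant vector fields satisfying X_Y − X_X = ξ₁ and Y_Y − Y_X = ξ₂ + [ξ₁, X_X]. Define 𝒬₁ˣ := Q₁ˣ − L(X_X) Q₀ and 𝒬₂ˣ := Q₂ˣ − 2 L(X_X) Q₁ˣ − (L(Y_X) − L(X_X)²) Q₀, and similarly for Y. Then 𝒬₁ʸ = 𝒬₁ˣ and 𝒬₂ʸ = 𝒬₂ˣ, i.e., the variables 𝒬₁ and 𝒬₂ are gauge invariant. -/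
/-- Gauge invariance of the variables `𝒬₁ := Q₁ − L(X) Q₀` and
`𝒬₂ := Q₂ − 2 L(X) Q₁ − (L(Y) − L(X)²) Q₀`, given the first- and second-order
gauge-transformation rules for `Q₁`, `Q₂` and the transformation rules
`X_Y − X_X = ξ₁`, `Y_Y − Y_X = ξ₂ + [ξ₁, X_X]` of the gauge-variant vector fields. -/
theorem gauge_invariant_variables
    (R M V : Type*) [CommRing R] [Algebra ℚ R]
    [AddCommGroup M] [Module R M]
    [LieRing V] [LieAlgebra R V]
    (L : V →ₗ[R] Module.End R M)
    (hL : ∀ u v : V, L ⁅u, v⁆ = L u * L v - L v * L u)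
    (Q₀ Q₁X Q₂X Q₁Y Q₂Y : M) (ξ₁ ξ₂ XX XY YX YY : V)
    (hQ1 : Q₁Y - Q₁X = (L ξ₁) Q₀)
    (hQ2 : Q₂Y - Q₂X = 2 • (L ξ₁) Q₁X + (L ξ₂ + (L ξ₁) ^ 2) Q₀)
    (hXtrans : XY - XX = ξ₁)
    (hYtrans : YY - YX = ξ₂ + ⁅ξ₁, XX⁆) :
    Q₁Y - (L XY) Q₀ = Q₁X - (L XX) Q₀ ∧
    Q₂Y - 2 • (L XY) Q₁Y - (L YY - (L XY) ^ 2) Q₀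
      = Q₂X - 2 • (L XX) Q₁X - (L YX - (L XX) ^ 2) Q₀ := by
  have hXY : XY = XX + ξ₁ := by rw [← hXtrans]; abel
  have hYY : YY = YX + (ξ₂ + ⁅ξ₁, XX⁆) := by rw [← hYtrans]; abel
  have hQ1' : Q₁Y = Q₁X + (L ξ₁) Q₀ := by rw [← hQ1]; abel
  have hQ2' : Q₂Y = Q₂X + (2 • (L ξ₁) Q₁X + (L ξ₂ + (L ξ₁) ^ 2) Q₀) := by
    rw [← hQ2]; abel
  subst hXY hYY hQ1' hQ2'
  constructor
  · simp only [map_add, LinearMap.add_apply]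
    abel
  · simp only [map_add, hL, sq, LinearMap.add_apply, LinearMap.sub_apply,
      Module.End.mul_apply, mul_add, add_mul, smul_add, two_smul]
    abel
end

section
/- Under the same hypotheses as for the gauge-invariance of Φ, suppose additionally that a function h_{(L)} transforms as Δ(a² h_{(L)}) = −2ℋξ_η + (2/3)Δ_s ξ_{(L)}, where Δ_s is a fixed linear operator (the spatial Laplacian) commuting with multiplication by functions of η and with ∂_η acting on spatially-parametrized families, and Δ(a² h_{(TL)}) = 2ξ_{(L)}, Δh_{(VL)} = ξ_η + (∂_η − 2ℋ)ξ_{(L)}. Define X_η := h_{(VL)} − (a²/2)∂_η h_{(TL)} and Ψ by −2a²Ψ := a²(h_{(L)} − (1/3)Δ_s h_{(TL)}) + 2ℋ X_η. Then ΔΨ = 0, i.e., the curvature perturbation Ψ is gauge invariant. -/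
/-- Gauge invariance of the curvature perturbation `Ψ`, defined by
`−2a²Ψ := a²(h_{(L)} − (1/3)Δ_s h_{(TL)}) + 2ℋ X_η` with
`X_η := h_{(VL)} − (a²/2) ∂_η h_{(TL)}`.  Fields are modelled as functions of conformal
time `η` with values in a normed vector space `E` of spatial profiles, and the spatial
Laplacian `Δ_s` is an abstract continuous linear operator on `E` (hence it commutes with
`∂_η` and with multiplication by functions of `η`). -/
theorem curvature_perturbation_gauge_invariant
    (E : Type*) [NormedAddCommGroup E] [NormedSpace ℝ E]
    (Δs : E →L[ℝ] E)
    (a H : ℝ → ℝ) (ha : ∀ η, 0 < a η) (hsa : ContDiff ℝ (⊤ : ℕ∞) a)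
    (hH : ∀ η, H η = deriv a η / a η)
    (hLX hLY hTLX hTLY hVLX hVLY ξη ξL : ℝ → E)
    (hsTLX : ContDiff ℝ (⊤ : ℕ∞) hTLX) (hsTLY : ContDiff ℝ (⊤ : ℕ∞) hTLY)
    (hsξL : ContDiff ℝ (⊤ : ℕ∞) ξL)
    (hVL : ∀ η, hVLY η - hVLX η = ξη η + deriv ξL η - (2 * H η) • ξL η)
    (hTL : ∀ η, (a η) ^ 2 • hTLY η - (a η) ^ 2 • hTLX η = (2 : ℝ) • ξL η)
    (hLtrans : ∀ η, (a η) ^ 2 • hLY η - (a η) ^ 2 • hLX η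
        = (-(2 * H η)) • ξη η + (2 / 3 : ℝ) • Δs (ξL η)) :
    ∀ η,
      (-(1 / (2 * (a η) ^ 2))) •
          ((a η) ^ 2 • (hLY η - (1 / 3 : ℝ) • Δs (hTLY η))
            + (2 * H η) • (hVLY η - ((a η) ^ 2 / 2) • deriv hTLY η))
        =
      (-(1 / (2 * (a η) ^ 2))) •
          ((a η) ^ 2 • (hLX η - (1 / 3 : ℝ) • Δs (hTLX η))
            + (2 * H η) • (hVLX η - ((a η) ^ 2 / 2) • deriv hTLX η)) := by
  intro η
  have haη := ha η
  have hane : a η ≠ 0 := (ha η).ne'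
  have ha2ne : (a η) ^ 2 ≠ 0 := pow_ne_zero 2 hane
  have hda : deriv a η = H η * a η := by rw [hH]; field_simp
  -- derivative facts
  have hda' : HasDerivAt a (deriv a η) η :=
    (hsa.differentiable (by simp) η).hasDerivAt
  have ha2' : HasDerivAt (fun t => a t ^ 2) (2 * a η ^ 1 * deriv a η) η := hda'.pow 2
  have hYd : HasDerivAt hTLY (deriv hTLY η) η := (hsTLY.differentiable (by simp) η).hasDerivAt
  have hXd : HasDerivAt hTLX (deriv hTLX η) η := (hsTLX.differentiable (by simp) η).hasDerivAt
  have hξd : HasDerivAt ξL (deriv ξL η) η := (hsξL.differentiable (by simp) η).hasDerivAt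
  have hfun : (fun t => (a t) ^ 2 • hTLY t) =
      fun t => (a t) ^ 2 • hTLX t + (2 : ℝ) • ξL t := by
    funext t; have := hTL t; linear_combination (norm := module) this
  have hdL : HasDerivAt (fun t => (a t) ^ 2 • hTLY t)
      ((a η) ^ 2 • deriv hTLY η + (2 * a η ^ 1 * deriv a η) • hTLY η) η :=
    ha2'.smul hYd
  have hdR : HasDerivAt (fun t => (a t) ^ 2 • hTLX t + (2 : ℝ) • ξL t)
      (((a η) ^ 2 • deriv hTLX η + (2 * a η ^ 1 * deriv a η) • hTLX η)
        + (2 : ℝ) • deriv ξL η) η :=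
    (ha2'.smul hXd).add (hξd.const_smul (2 : ℝ))
  rw [hfun] at hdL
  have E4 : (a η) ^ 2 • deriv hTLY η + (2 * a η ^ 1 * deriv a η) • hTLY η
      = ((a η) ^ 2 • deriv hTLX η + (2 * a η ^ 1 * deriv a η) • hTLX η)
        + (2 : ℝ) • deriv ξL η := hdL.unique hdR
  -- solve for Y-quantities
  have h2 : hTLY η = hTLX η + ((a η) ^ 2)⁻¹ • ((2 : ℝ) • ξL η) := by
    have := hTL η
    have h := congrArg (fun v => ((a η) ^ 2)⁻¹ • v) this
    simp only [smul_sub, inv_smul_smul₀ ha2ne] at h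
    linear_combination (norm := module) h
  have h1 : hLY η = hLX η + ((a η) ^ 2)⁻¹ •
      ((-(2 * H η)) • ξη η + (2 / 3 : ℝ) • Δs (ξL η)) := by
    have := hLtrans η
    have h := congrArg (fun v => ((a η) ^ 2)⁻¹ • v) this
    simp only [smul_sub, inv_smul_smul₀ ha2ne] at h
    linear_combination (norm := module) h
  have h3 : hVLY η = hVLX η + (ξη η + deriv ξL η - (2 * H η) • ξL η) := by
    have := hVL η; linear_combination (norm := module) this
  have h4 : deriv hTLY η = deriv hTLX η + ((a η) ^ 2)⁻¹ •
      ((2 : ℝ) • deriv ξL η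
        - (2 * a η ^ 1 * deriv a η) • (((a η) ^ 2)⁻¹ • ((2 : ℝ) • ξL η))) := by
    rw [h2] at E4
    have h := congrArg (fun v => ((a η) ^ 2)⁻¹ • v) E4
    simp only [smul_add, smul_sub, inv_smul_smul₀ ha2ne] at h
    linear_combination (norm := module) h
  rw [h1, h2, h3, h4, hda]
  simp only [map_add, map_smul, smul_add, smul_sub, pow_one]
  match_scalars <;> field_simp <;> ring
end

section
/- Let (A, ·) be a commutative R-algebra (R ⊇ ℚ), D : A → A an R-derivation, and Φ*(λ) := 1 + λD + (λ²/2)(D₂ + D²) : A → A[[λ]]/(λ³) for some R-linear D₂ : A → A. Suppose Φ*(λ) is multiplicative modulo λ³, i.e., Φ*(λ)(f·g) ≡ Φ*(λ)(f)·Φ*(λ)(g) mod λ³ for all f, g ∈ A. Then D₂ is an R-derivation of A. -/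
open Polynomial

/-- Sonego–Bruni multiplicativity argument: if
`Φ*(λ) = 1 + λ D + (λ²/2)(D₂ + D²)` is multiplicative modulo `λ³` on a commutative
`R`-algebra `A` (with `ℚ ⊆ R`), where `D` is an `R`-derivation and `D₂` is `R`-linear,
then `D₂` is itself an `R`-derivation of `A`.  The truncated pull-back of an element `f`
is represented by the polynomial `C f + X * C (D f) + X² * C ((1/2) • (D₂ f + D (D f)))`,
and multiplicativity mod `λ³` is the statement that all coefficients of order `< 3`
agree. -/
theorem multiplicative_second_order_coefficient_is_derivation
    (R A : Type*) [CommRing R] [Algebra ℚ R] [CommRing A]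
    [Algebra R A] [Algebra ℚ A] [IsScalarTower ℚ R A]
    (D : Derivation R A A) (D₂ : A →ₗ[R] A)
    (hmul : ∀ f g : A, ∀ k < 3,
      (Polynomial.C (f * g) + Polynomial.X * Polynomial.C (D (f * g))
          + Polynomial.X ^ 2 *
              Polynomial.C ((1 / 2 : ℚ) • (D₂ (f * g) + D (D (f * g))))).coeff k
      =
      ((Polynomial.C f + Polynomial.X * Polynomial.C (D f)
            + Polynomial.X ^ 2 * Polynomial.C ((1 / 2 : ℚ) • (D₂ f + D (D f))))
        * (Polynomial.C g + Polynomial.X * Polynomial.C (D g)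
            + Polynomial.X ^ 2 * Polynomial.C ((1 / 2 : ℚ) • (D₂ g + D (D g))))).coeff k) :
    ∃ E : Derivation R A A, ∀ x : A, E x = D₂ x := by
  have key : ∀ f g : A, D₂ (f * g) = f • D₂ g + g • D₂ f := by
    intro f g
    have h := hmul f g 2 (by norm_num)
    simp only [mul_add, add_mul, coeff_add, coeff_C, coeff_X_mul,
      mul_comm Polynomial.X, ← mul_assoc, coeff_mul_X, coeff_mul_C,
      Polynomial.X_pow_mul, coeff_mul_X_pow', coeff_X_pow] at h
    norm_num at h
    have h2 := congrArg (fun x : A => (2:ℚ) • x) h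
    simp only [add_mul, mul_add, smul_add, smul_smul, smul_mul_assoc, mul_smul_comm] at h2
    norm_num at h2
    rw [two_smul] at h2
    have : D₂ (f*g) = f * D₂ g + g * D₂ f := by linear_combination h2
    rw [this]; simp [smul_eq_mul]
  exact ⟨Derivation.mk' D₂ key, fun x => rfl⟩
end
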